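/- arXiv:1303.2705 — 6 statements merged into one kernel-verified Lean document; each statement's English description precedes it below -/
import Mathlib

section
/- For each n ∈ ℕ let f_n : ℕⁿ → ℕ be an arbitrary function. Then there exists a Borel probability measure σ on ℕ such that, with respect to the infinite product measure σ^ℕ on the sequence space ℕ^ℕ, almost every sequence (k_n)_{n∈ℕ} satisfies k_n ≥ f_n(k_0, …, k_{n−1}) for infinitely many n ∈ ℕ. -/
/-!
Choose a sequence `a` growing so fast that `f n x ≤ a (J + 1)` whenever `n ≤ a J` and all
`x i ≤ a J`, and let `σ` give mass `2⁻¹ ^ (j + 1)` to `a j`. If `n` is a strict record of a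
sequence `k` with values in the range of `a`, and some earlier `k i` is at least `n`, then writing
`max_{i<n} k i = a J` we get `k n ≥ a (J + 1) ≥ f n (k 0, …, k (n-1))`. An unbounded sequence has
infinitely many strict records. The tail `σ [4 ^ (L + 1), ∞) ≥ 2⁻¹ ^ (L + 1)` gives, by
Borel–Cantelli for the events `{k i < 4 ^ (L + 1) for all i < 4 ^ L}`, that almost surely every
large `n` has some `i < n` with `n ≤ k i`.
-/

open MeasureTheory Filter Set
open scoped ENNReal

theorem pow_mul_natCast_mul_le_one {R : Type*} [CommSemiring R] [PartialOrder R]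
    [IsOrderedRing R] {x w : R} (hx : 0 ≤ x) (hw : 0 ≤ w) (h : x + w ≤ 1) :
    ∀ m : ℕ, x ^ m * (m * w) ≤ 1
  | 0 => by simp
  | m + 1 =>
    calc x ^ (m + 1) * ((m + 1 : ℕ) * w) = x * (x ^ m * (m * w)) + x ^ (m + 1) * w := by
          push_cast; ring
      _ ≤ x * 1 + 1 * w := by
          gcongr
          · exact pow_mul_natCast_mul_le_one hx hw h m
          · exact pow_le_one₀ hx (le_of_add_le_of_nonneg_left h hw)
      _ ≤ 1 := by simpa using h

section HeavyTail

variable {σ : Measure ℕ} [IsProbabilityMeasure σ]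

theorem infinitePi_pi_range_Iio_le {L : ℕ}
    (htail : (2⁻¹ : ℝ≥0∞) ^ (L + 1) ≤ σ (Ici (4 ^ (L + 1)))) :
    Measure.infinitePi (fun _ => σ)
      ((Finset.range (4 ^ L) : Set ℕ).pi fun _ => Iio (4 ^ (L + 1))) ≤ 2 * 2⁻¹ ^ L := by
  rw [Measure.infinitePi_pi _ fun _ _ => .of_discrete, Finset.prod_const, Finset.card_range]
  have hsplit : σ (Iio (4 ^ (L + 1))) + 2⁻¹ ^ (L + 1) ≤ 1 :=
    calc σ (Iio (4 ^ (L + 1))) + 2⁻¹ ^ (L + 1)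
        ≤ σ (Iio (4 ^ (L + 1))) + σ (Ici (4 ^ (L + 1))) := by gcongr
      _ = 1 := by rw [← compl_Iio, measure_add_measure_compl .of_discrete, measure_univ]
  have hcancel : ((4 ^ L : ℕ) : ℝ≥0∞) * 2⁻¹ ^ (L + 1) * (2 * 2⁻¹ ^ L) = 1 := by
    have h2 : (2⁻¹ : ℝ≥0∞) * 2 = 1 := ENNReal.inv_mul_cancel (by norm_num) (by norm_num)
    calc ((4 ^ L : ℕ) : ℝ≥0∞) * 2⁻¹ ^ (L + 1) * (2 * 2⁻¹ ^ L)
        = (2 * (2⁻¹ * 2) * 2⁻¹) ^ L * (2⁻¹ * 2) := by push_cast; ring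
      _ = 1 := by simp [h2, ENNReal.mul_inv_cancel]
  calc σ (Iio (4 ^ (L + 1))) ^ 4 ^ L
      = σ (Iio (4 ^ (L + 1))) ^ 4 ^ L *
          (((4 ^ L : ℕ) : ℝ≥0∞) * 2⁻¹ ^ (L + 1) * (2 * 2⁻¹ ^ L)) := by rw [hcancel, mul_one]
    _ ≤ 1 * (2 * 2⁻¹ ^ L) := by
        rw [← mul_assoc]
        gcongr
        exact pow_mul_natCast_mul_le_one zero_le zero_le hsplit _
    _ = 2 * 2⁻¹ ^ L := one_mul _

theorem ae_eventually_exists_lt_le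
    (htail : ∀ L, (2⁻¹ : ℝ≥0∞) ^ (L + 1) ≤ σ (Ici (4 ^ (L + 1)))) :
    ∀ᵐ k ∂(Measure.infinitePi fun _ : ℕ => σ), ∀ᶠ n in atTop, ∃ i < n, n ≤ k i := by
  have hsum : ∑' L, Measure.infinitePi (fun _ => σ)
      ((Finset.range (4 ^ L) : Set ℕ).pi fun _ => Iio (4 ^ (L + 1))) ≠ ∞ := by
    refine ne_top_of_le_ne_top ?_
      (ENNReal.tsum_le_tsum fun L => infinitePi_pi_range_Iio_le (htail L))
    rw [ENNReal.tsum_mul_left, ENNReal.tsum_geometric_two]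
    norm_num
  have hlog : Tendsto (Nat.log 4) atTop atTop :=
    tendsto_atTop_atTop.2 fun L => ⟨4 ^ L, fun n hn => Nat.le_log_of_pow_le (by norm_num) hn⟩
  filter_upwards [ae_eventually_notMem hsum] with k hk
  filter_upwards [hlog.eventually hk, eventually_ne_atTop 0] with n hn hn0
  simp only [Set.mem_pi, Finset.coe_range, mem_Iio, not_forall, not_lt, exists_prop] at hn
  obtain ⟨i, hi, hki⟩ := hn
  exact ⟨i, hi.trans_le (Nat.pow_log_le_self 4 hn0),
    (Nat.lt_pow_succ_log_self (by norm_num) n).le.trans hki⟩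

end HeavyTail

theorem exists_record_ge {k : ℕ → ℕ} (hk : ∀ m, ∃ i, m ≤ k i) (M : ℕ) :
    ∃ n ≥ M, ∀ i < n, k i < k n := by
  classical
  set B := (Finset.range M).sup k
  have hex : ∃ n, B < k n := hk (B + 1)
  refine ⟨Nat.find hex, ?_, fun i hi =>
    (not_lt.1 (Nat.find_min hex hi)).trans_lt (Nat.find_spec hex)⟩
  by_contra! h
  exact (Nat.find_spec hex).not_ge (Finset.le_sup (Finset.mem_range.2 h))

section Domination

variable (f : (n : ℕ) → (Fin n → ℕ) → ℕ)

def boxSup (v : ℕ) : ℕ :=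
  (Finset.range (v + 1)).sup fun n =>
    Finset.univ.sup fun x : Fin n → Fin (v + 1) => f n fun i => x i

theorem apply_le_boxSup {n v : ℕ} (x : Fin n → ℕ) (hn : n ≤ v) (hx : ∀ i, x i ≤ v) :
    f n x ≤ boxSup f v :=
  (Finset.le_sup (f := fun y : Fin n → Fin (v + 1) => f n fun i => y i)
    (Finset.mem_univ fun i => ⟨x i, Nat.lt_succ_of_le (hx i)⟩)).trans
  (Finset.le_sup (f := fun m => Finset.univ.sup fun y : Fin m → Fin (v + 1) => f m fun i => y i)
    (Finset.mem_range.2 (Nat.lt_succ_of_le hn)))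

def dominatingSeq : ℕ → ℕ
  | 0 => 4
  | j + 1 => 4 * dominatingSeq j + boxSup f (dominatingSeq j)

theorem dominatingSeq_monotone : Monotone (dominatingSeq f) :=
  monotone_nat_of_le_succ fun j => by simp only [dominatingSeq]; omega

theorem four_pow_le_dominatingSeq (L : ℕ) : 4 ^ (L + 1) ≤ dominatingSeq f L := by
  induction L with
  | zero => simp [dominatingSeq]
  | succ L ih => simp only [dominatingSeq, pow_succ] at ih ⊢; omega

theorem apply_le_dominatingSeq_succ {J n : ℕ} (x : Fin n → ℕ) (hn : n ≤ dominatingSeq f J)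
    (hx : ∀ i, x i ≤ dominatingSeq f J) : f n x ≤ dominatingSeq f (J + 1) :=
  (apply_le_boxSup f x hn hx).trans (Nat.le_add_left _ _)

theorem apply_le_of_isRecord {k : ℕ → ℕ} (hk : ∀ i, k i ∈ range (dominatingSeq f)) {n : ℕ}
    (hrec : ∀ i < n, k i < k n) (hn : ∃ i < n, n ≤ k i) :
    f n (fun i : Fin n => k i) ≤ k n := by
  obtain ⟨i₀, hi₀, hni₀⟩ := hn
  obtain ⟨m, hm, hmax⟩ :=
    Finset.exists_max_image (Finset.range n) k ⟨i₀, Finset.mem_range.2 hi₀⟩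
  obtain ⟨J, hJ⟩ := hk m
  obtain ⟨R, hR⟩ := hk n
  have hJR : J < R := (dominatingSeq_monotone f).reflect_lt
    (hJ ▸ hR ▸ hrec m (Finset.mem_range.1 hm))
  have hbound : ∀ i < n, k i ≤ dominatingSeq f J := fun i hi =>
    hJ ▸ hmax i (Finset.mem_range.2 hi)
  calc f n (fun i : Fin n => k i)
      ≤ dominatingSeq f (J + 1) :=
        apply_le_dominatingSeq_succ f _ (hni₀.trans (hbound i₀ hi₀)) fun i => hbound i i.2
    _ ≤ dominatingSeq f R := dominatingSeq_monotone f hJR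
    _ = k n := hR

theorem frequently_apply_le {k : ℕ → ℕ} (hk : ∀ i, k i ∈ range (dominatingSeq f))
    (hbig : ∀ᶠ n in atTop, ∃ i < n, n ≤ k i) :
    ∃ᶠ n in atTop, f n (fun i : Fin n => k i) ≤ k n := by
  have hunbdd : ∀ m, ∃ i, m ≤ k i := fun m =>
    let ⟨_, ⟨i, _, hi⟩, hn⟩ := (hbig.and (eventually_ge_atTop m)).exists
    ⟨i, hn.trans hi⟩
  exact ((frequently_atTop.2 (exists_record_ge hunbdd)).and_eventually hbig).mono
    fun n ⟨hrec, hn⟩ => apply_le_of_isRecord f hk hrec hn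

end Domination

noncomputable def geomMeasureAt (a : ℕ → ℕ) : Measure ℕ :=
  Measure.sum fun j => (2⁻¹ : ℝ≥0∞) ^ (j + 1) • Measure.dirac (a j)

section GeomMeasureAt

variable (a : ℕ → ℕ)

instance : IsProbabilityMeasure (geomMeasureAt a) :=
  ⟨by simp [geomMeasureAt, ENNReal.tsum_geometric_add_one, ENNReal.inv_mul_cancel]⟩

theorem ae_mem_range_geomMeasureAt : ∀ᵐ x ∂geomMeasureAt a, x ∈ range a :=
  Measure.ae_sum_iff.2 fun j => Measure.ae_smul_measure (by simp) _

theorem pow_le_geomMeasureAt_Ici {c L : ℕ} (h : c ≤ a L) :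
    (2⁻¹ : ℝ≥0∞) ^ (L + 1) ≤ geomMeasureAt a (Ici c) :=
  calc (2⁻¹ : ℝ≥0∞) ^ (L + 1) = ((2⁻¹ : ℝ≥0∞) ^ (L + 1) • Measure.dirac (a L)) (Ici c) := by
        simp [h]
    _ ≤ geomMeasureAt a (Ici c) := Measure.le_sum _ L _

end GeomMeasureAt

/-- For any family of functions `fₙ : ℕⁿ → ℕ` there exists a Borel
probability measure `σ` on `ℕ` such that, with respect to the infinite product measure
`σ^ℕ` on `ℕ^ℕ` (characterized here by its values on cylinder sets), almost every sequence
`(kₙ)` satisfies `kₙ ≥ fₙ(k₀, …, k_{n-1})` for infinitely many `n`. -/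
theorem exists_sudden_measure (f : (n : ℕ) → (Fin n → ℕ) → ℕ) :
    ∃ (σ : Measure ℕ) (P : Measure (ℕ → ℕ)),
      IsProbabilityMeasure σ ∧ IsProbabilityMeasure P ∧
      (∀ (s : Finset ℕ) (B : ℕ → Set ℕ),
        P {k : ℕ → ℕ | ∀ i ∈ s, k i ∈ B i} = ∏ i ∈ s, σ (B i)) ∧
      ∀ᵐ k ∂P, {n : ℕ | f n (fun i : Fin n => k i) ≤ k n}.Infinite := by
  set σ := geomMeasureAt (dominatingSeq f)
  refine ⟨σ, Measure.infinitePi fun _ => σ, inferInstance, inferInstance,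
    fun s B => Measure.infinitePi_pi _ fun _ _ => .of_discrete, ?_⟩
  have hrange : ∀ᵐ k ∂Measure.infinitePi (fun _ => σ), ∀ i, k i ∈ range (dominatingSeq f) :=
    ae_all_iff.2 fun i =>
      (measurePreserving_eval_infinitePi (fun _ : ℕ => σ) i).quasiMeasurePreserving.ae
        (ae_mem_range_geomMeasureAt _)
  have hbig := ae_eventually_exists_lt_le fun L =>
    pow_le_geomMeasureAt_Ici _ (four_pow_le_dominatingSeq f L)
  filter_upwards [hrange, hbig] with k hk hk'
  exact Nat.frequently_atTop_iff_infinite.1 (frequently_apply_le f hk hk')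
end

section
/- Let S be a countable set, and let (a_s)_{s∈S} and (b_s)_{s∈S} be families of strictly positive reals with Σ_{s∈S} a_s = 1 and Σ_{s∈S} b_s = 1. Let (c_s)_{s∈S} and (d_s)_{s∈S} be bounded families of reals. Suppose K ≥ 0 satisfies |ln(a_s) − ln(b_s)| ≤ K for all s ∈ S, and set ε = 2/(1 + e^K). Then Σ_{s∈S} (a_s c_s − b_s d_s) ≤ (1 − ε)·(sup_{s∈S} c_s − inf_{s∈S} d_s) + ε·sup_{s∈S} (c_s − d_s). -/
/-!
Couple `a` and `b` through their common part `m = min a b`: writing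
`a c - b d = m (c - d) + (a - m) c - (b - m) d` bounds the sum by
`M · sup (c - d) + (1 - M) (sup c - inf d)`, where `M = Σ m`. Since `sup (c - d) ≤ sup c - inf d`,
this bound decreases in `M`, and the log-closeness gives `b ≤ e^K a` and `a ≤ e^K b`, hence
`min a b ≥ (a + b) / (1 + e^K)` pointwise and `M ≥ 2 / (1 + e^K)`.
-/

open Real Set

theorem le_exp_mul_of_log_sub_le {x y K : ℝ} (hx : 0 < x) (hy : 0 < y)
    (h : log y - log x ≤ K) : y ≤ exp K * x :=
  calc y ≤ exp (K + log x) := (log_le_iff_le_exp hy).1 (by linarith)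
    _ = exp K * x := by rw [exp_add, exp_log hx]

theorem add_div_one_add_exp_le_min {x y K : ℝ} (hx : 0 < x) (hy : 0 < y)
    (h : |log x - log y| ≤ K) : (x + y) / (1 + exp K) ≤ min x y := by
  have hpos : 0 < 1 + exp K := by positivity
  have hyx := le_exp_mul_of_log_sub_le (K := K) hx hy (by linarith [(abs_le.1 h).1])
  have hxy := le_exp_mul_of_log_sub_le (K := K) hy hx (by linarith [(abs_le.1 h).2])
  exact le_min ((div_le_iff₀ hpos).2 (by linarith)) ((div_le_iff₀ hpos).2 (by linarith))

section tsum

variable {S : Type*}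

theorem Summable.mul_of_bddBelow_of_bddAbove {w c : S → ℝ} (hw : Summable w)
    (hcb : BddBelow (range c)) (hca : BddAbove (range c)) :
    Summable fun s => w s * c s := by
  obtain ⟨B, hB⟩ := isBounded_iff_forall_norm_le.1 ((isBounded_iff_bddBelow_bddAbove).2 ⟨hcb, hca⟩)
  refine (hw.norm.mul_right B).of_norm_bounded fun s => ?_
  rw [norm_mul]
  exact mul_le_mul_of_nonneg_left (hB _ ⟨s, rfl⟩) (norm_nonneg _)

theorem tsum_mul_le_tsum_mul_ciSup {w c : S → ℝ} (hw0 : ∀ s, 0 ≤ w s) (hw : Summable w)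
    (hcb : BddBelow (range c)) (hca : BddAbove (range c)) :
    ∑' s, w s * c s ≤ (∑' s, w s) * ⨆ s, c s := by
  rw [← tsum_mul_right]
  exact (hw.mul_of_bddBelow_of_bddAbove hcb hca).tsum_le_tsum
    (fun s => mul_le_mul_of_nonneg_left (le_ciSup hca s) (hw0 s)) (hw.mul_right _)

theorem tsum_mul_ciInf_le_tsum_mul {w c : S → ℝ} (hw0 : ∀ s, 0 ≤ w s) (hw : Summable w)
    (hcb : BddBelow (range c)) (hca : BddAbove (range c)) :
    (∑' s, w s) * ⨅ s, c s ≤ ∑' s, w s * c s := by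
  rw [← tsum_mul_right]
  exact (hw.mul_right _).tsum_le_tsum
    (fun s => mul_le_mul_of_nonneg_left (ciInf_le hcb s) (hw0 s))
    (hw.mul_of_bddBelow_of_bddAbove hcb hca)

theorem tsum_add_div_one_add_exp_le_tsum_min {a b : S → ℝ} {K : ℝ} (ha : ∀ s, 0 < a s)
    (hb : ∀ s, 0 < b s) (hsa : Summable a) (hsb : Summable b)
    (hab : ∀ s, |log (a s) - log (b s)| ≤ K) :
    (∑' s, a s + ∑' s, b s) / (1 + exp K) ≤ ∑' s, min (a s) (b s) := by
  rw [← hsa.tsum_add hsb, ← tsum_div_const]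
  exact ((hsa.add hsb).div_const _).tsum_le_tsum
    (fun s => add_div_one_add_exp_le_min (ha s) (hb s) (hab s))
    (hsa.of_nonneg_of_le (fun s => le_min (ha s).le (hb s).le) fun s => min_le_left _ _)

theorem tsum_mul_sub_mul_le_of_le_of_le {a b m c d : S → ℝ} (hm0 : ∀ s, 0 ≤ m s)
    (hma : ∀ s, m s ≤ a s) (hmb : ∀ s, m s ≤ b s) (ha : Summable a) (hb : Summable b)
    (hcb : BddBelow (range c)) (hca : BddAbove (range c))
    (hdb : BddBelow (range d)) (hda : BddAbove (range d)) :
    ∑' s, (a s * c s - b s * d s) ≤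
      (∑' s, m s) * (⨆ s, (c s - d s)) + (∑' s, a s - ∑' s, m s) * (⨆ s, c s)
        - (∑' s, b s - ∑' s, m s) * ⨅ s, d s := by
  have hm : Summable m := ha.of_nonneg_of_le hm0 hma
  have hcdb : BddBelow (range fun s => c s - d s) := by
    obtain ⟨C, hC⟩ := hcb
    obtain ⟨D, hD⟩ := hda
    exact ⟨C - D, by rintro _ ⟨s, rfl⟩; linarith [hC ⟨s, rfl⟩, hD ⟨s, rfl⟩]⟩
  have hcda : BddAbove (range fun s => c s - d s) := by
    obtain ⟨C, hC⟩ := hca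
    obtain ⟨D, hD⟩ := hdb
    exact ⟨C - D, by rintro _ ⟨s, rfl⟩; linarith [hC ⟨s, rfl⟩, hD ⟨s, rfl⟩]⟩
  have hs₁ := hm.mul_of_bddBelow_of_bddAbove hcdb hcda
  have hs₂ := (ha.sub hm).mul_of_bddBelow_of_bddAbove hcb hca
  have hs₃ := (hb.sub hm).mul_of_bddBelow_of_bddAbove hdb hda
  have hsplit : ∑' s, (a s * c s - b s * d s) = ∑' s, m s * (c s - d s)
      + ∑' s, (a s - m s) * c s - ∑' s, (b s - m s) * d s := by
    rw [← hs₁.tsum_add hs₂, ← (hs₁.add hs₂).tsum_sub hs₃]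
    exact tsum_congr fun s => by ring
  have h₁ := tsum_mul_le_tsum_mul_ciSup hm0 hm hcdb hcda
  have h₂ := tsum_mul_le_tsum_mul_ciSup (fun s => sub_nonneg.2 (hma s)) (ha.sub hm) hcb hca
  have h₃ := tsum_mul_ciInf_le_tsum_mul (fun s => sub_nonneg.2 (hmb s)) (hb.sub hm) hdb hda
  rw [ha.tsum_sub hm] at h₂
  rw [hb.tsum_sub hm] at h₃
  rw [hsplit]
  linarith

end tsum

theorem sum_sub_le_of_log_close_general
    {S : Type*} (a b c d : S → ℝ)
    (ha : ∀ s, 0 < a s) (hb : ∀ s, 0 < b s)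
    (hsa : ∑' s, a s = 1) (hsb : ∑' s, b s = 1)
    (hcub : BddAbove (Set.range c)) (hclb : BddBelow (Set.range c))
    (hdub : BddAbove (Set.range d)) (hdlb : BddBelow (Set.range d))
    (K : ℝ)
    (hab : ∀ s, |Real.log (a s) - Real.log (b s)| ≤ K) :
    ∑' s, (a s * c s - b s * d s) ≤
      (1 - 2 / (1 + Real.exp K)) * ((⨆ s, c s) - ⨅ s, d s)
        + (2 / (1 + Real.exp K)) * ⨆ s, (c s - d s) := by
  have ha' : Summable a := by by_contra h; simp [tsum_eq_zero_of_not_summable h] at hsa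
  have hb' : Summable b := by by_contra h; simp [tsum_eq_zero_of_not_summable h] at hsb
  have : Nonempty S := by by_contra h; simp [not_nonempty_iff.1 h] at hsa
  have hM : 2 / (1 + exp K) ≤ ∑' s, min (a s) (b s) := by
    simpa [hsa, hsb, one_add_one_eq_two] using
      tsum_add_div_one_add_exp_le_tsum_min ha hb ha' hb' hab
  have hsup : ⨆ s, (c s - d s) ≤ (⨆ s, c s) - ⨅ s, d s :=
    ciSup_le fun s => by linarith [le_ciSup hcub s, ciInf_le hdlb s]
  have hcoupling := tsum_mul_sub_mul_le_of_le_of_le (fun s => le_min (ha s).le (hb s).le)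
    (fun s => min_le_left _ _) (fun s => min_le_right _ _) ha' hb' hclb hcub hdlb hdub
  rw [hsa, hsb] at hcoupling
  nlinarith [mul_le_mul_of_nonneg_right hM (sub_nonneg.2 hsup)]

/-- Let `S` be countable, `(aₛ)`, `(bₛ)` strictly positive probability
vectors, and `(cₛ)`, `(dₛ)` bounded real families.  If `|ln aₛ − ln bₛ| ≤ K` for all `s`
and `ε = 2/(1 + e^K)`, then
`Σₛ (aₛ cₛ − bₛ dₛ) ≤ (1 − ε)(sup c − inf d) + ε · sup (c − d)`. -/
theorem sum_sub_le_of_log_close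
    {S : Type*} [Countable S] (a b c d : S → ℝ)
    (ha : ∀ s, 0 < a s) (hb : ∀ s, 0 < b s)
    (hsa : ∑' s, a s = 1) (hsb : ∑' s, b s = 1)
    (hcub : BddAbove (Set.range c)) (hclb : BddBelow (Set.range c))
    (hdub : BddAbove (Set.range d)) (hdlb : BddBelow (Set.range d))
    (K : ℝ) (hK : 0 ≤ K)
    (hab : ∀ s, |Real.log (a s) - Real.log (b s)| ≤ K) :
    ∑' s, (a s * c s - b s * d s) ≤
      (1 - 2 / (1 + Real.exp K)) * ((⨆ s, c s) - ⨅ s, d s)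
        + (2 / (1 + Real.exp K)) * ⨆ s, (c s - d s) :=
  sum_sub_le_of_log_close_general a b c d ha hb hsa hsb hcub hclb hdub hdlb K hab
end

section
/- Let a ∈ ℂ be transcendental over ℚ. For each integer d ≥ 2 define S_d : ℂ → ℂ by S_d(z) = a·zᵈ + 1. Then for every n ≥ 1 and every finite sequence of integers d_0, …, d_{n−1} with each d_j ≥ 2, the composition T = S_{d_{n−1}} ∘ ⋯ ∘ S_{d_0} has no fixed critical point: there is no p ∈ ℂ with T(p) = p and T′(p) = 0. -/
/-!
If `p` is a critical point of `T`, the chain rule and `S_d'(z) = d·a·z^(d-1)` show that the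
orbit of `p` under the successive maps `S_{d_j}` passes through `0`. If `p` is moreover fixed,
running the cycle once more from that point shows that a cyclic rotation of the maps sends `0`
back to `0`. But the image of `0` under any nonempty composition of maps `S_d` is a polynomial
in `a` with rational coefficients and constant term `1`, so `a` would be algebraic.
-/

open Polynomial

/-- The composition `S_{d_{n-1}} ∘ ⋯ ∘ S_{d_0}`, where `S_d (z) = a·z^d + 1`. -/
noncomputable def compSeq (a : ℂ) : (n : ℕ) → (Fin n → ℕ) → ℂ → ℂ
  | 0, _ => id
  | n + 1, d => (fun z => a * z ^ (d (Fin.last n)) + 1) ∘ compSeq a n (fun i => d i.castSucc)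

def compList {A : Type*} [Semiring A] (a : A) (l : List ℕ) (z : A) : A :=
  l.foldl (fun z e => a * z ^ e + 1) z

section Algebraic

variable {A B : Type*} [Semiring A] [Semiring B]

@[simp]
theorem compList_nil (a z : A) : compList a [] z = z := rfl

@[simp]
theorem compList_cons (a z : A) (e : ℕ) (l : List ℕ) :
    compList a (e :: l) z = compList a l (a * z ^ e + 1) := rfl

theorem compList_append (a z : A) (l₁ l₂ : List ℕ) :
    compList a (l₁ ++ l₂) z = compList a l₂ (compList a l₁ z) :=
  List.foldl_append

theorem map_compList {F : Type*} [FunLike F A B] [RingHomClass F A B] (f : F) (a z : A)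
    (l : List ℕ) : f (compList a l z) = compList (f a) l (f z) := by
  induction l generalizing z with
  | nil => rfl
  | cons e l ih => simp [ih]

theorem compList_zero_left {l : List ℕ} (hl : l ≠ []) (z : A) : compList 0 l z = 1 := by
  obtain ⟨e, l, rfl⟩ := List.exists_cons_of_ne_nil hl
  induction l generalizing z with
  | nil => simp
  | cons e' l ih => simpa using ih 1 (List.cons_ne_nil _ _)

/-- `compList a l 0 = P(a)` for the polynomial `P = compList X l 0`, and `P(0) = 1`. -/
theorem compList_zero_ne_zero {K R : Type*} [CommRing K] [Nontrivial K] [Ring R] [Algebra K R]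
    {a : R} (ha : Transcendental K a) {l : List ℕ} (hl : l ≠ []) : compList a l 0 ≠ 0 := by
  have hP : compList (X : K[X]) l 0 ≠ 0 := fun h => by
    have h₀ := congrArg (evalRingHom (0 : K)) h
    rw [map_compList, coe_evalRingHom, eval_X, compList_zero_left hl, eval_zero] at h₀
    exact one_ne_zero h₀
  intro h
  exact ha ⟨_, hP, by rw [map_compList, aeval_X, map_zero, h]⟩

end Algebraic

section Analytic

variable {𝕜 : Type*} [NontriviallyNormedField 𝕜]

theorem differentiable_compList (a : 𝕜) (l : List ℕ) : Differentiable 𝕜 (compList a l) := by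
  induction l with
  | nil => exact differentiable_id
  | cons e l ih => exact ih.comp (by fun_prop)

theorem deriv_compList_cons (a p : 𝕜) (e : ℕ) (l : List ℕ) :
    deriv (compList a (e :: l)) p
      = deriv (compList a l) (a * p ^ e + 1) * (a * (e * p ^ (e - 1))) := by
  change deriv (compList a l ∘ fun z => a * z ^ e + 1) p = _
  rw [deriv_comp p (differentiable_compList a l _) (by fun_prop), deriv_add_const,
    deriv_const_mul _ (differentiableAt_pow e), deriv_pow_field]

variable [CharZero 𝕜]

/-- Chain rule: `0` is the only critical point of each factor `z ↦ a * z ^ e + 1`. -/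
theorem exists_compList_eq_zero_of_deriv_eq_zero {a : 𝕜} (ha : a ≠ 0) {l : List ℕ}
    (hl : ∀ e ∈ l, 2 ≤ e) {p : 𝕜} (hp : deriv (compList a l) p = 0) :
    ∃ l₁ e l₂, l = l₁ ++ e :: l₂ ∧ compList a l₁ p = 0 := by
  induction l generalizing p with
  | nil => exact absurd (deriv_id p ▸ hp) one_ne_zero
  | cons e l ih =>
    have he : 2 ≤ e := hl e List.mem_cons_self
    rw [deriv_compList_cons] at hp
    rcases mul_eq_zero.1 hp with hp | hp
    · obtain ⟨l₁, e', l₂, rfl, h₀⟩ := ih (fun x hx => hl x (List.mem_cons_of_mem _ hx)) hp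
      exact ⟨e :: l₁, e', l₂, rfl, h₀⟩
    · have he₀ : (e : 𝕜) ≠ 0 := by exact_mod_cast (by omega : e ≠ 0)
      have hp₀ : p = 0 := by
        simpa [ha, he₀, show e - 1 ≠ 0 by omega] using hp
      exact ⟨[], e, l, rfl, hp₀⟩

end Analytic

theorem compSeq_eq_compList (a : ℂ) (n : ℕ) (d : Fin n → ℕ) :
    compSeq a n d = compList a (List.ofFn d) := by
  induction n with
  | zero => rfl
  | succ n ih =>
    funext z
    rw [List.ofFn_succ', List.concat_eq_append, compList_append]
    simp [compSeq, ih]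

theorem no_fixed_critical_point_general
    (a : ℂ) (ha : Transcendental ℚ a)
    (n : ℕ) (d : Fin n → ℕ) (hd : ∀ j, 2 ≤ d j) :
    ¬∃ p : ℂ, compSeq a n d p = p ∧ deriv (compSeq a n d) p = 0 := by
  rintro ⟨p, hfix, hcrit⟩
  rw [compSeq_eq_compList] at hfix hcrit
  have ha₀ : a ≠ 0 := fun h => ha (h ▸ isAlgebraic_zero)
  have hd' : ∀ e ∈ List.ofFn d, 2 ≤ e := by
    simpa [List.mem_ofFn] using hd
  obtain ⟨l₁, e, l₂, hsplit, hzero⟩ :=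
    exists_compList_eq_zero_of_deriv_eq_zero ha₀ hd' hcrit
  rw [hsplit, compList_append, hzero] at hfix
  refine compList_zero_ne_zero ha (l := e :: l₂ ++ l₁) (by simp) ?_
  rw [compList_append, hfix, hzero]

/-- If `a ∈ ℂ` is transcendental over `ℚ`, then for all `n ≥ 1` and all
degrees `d₀, …, d_{n-1} ≥ 2`, the composition `T = S_{d_{n-1}} ∘ ⋯ ∘ S_{d_0}` of the maps
`S_d(z) = a·z^d + 1` has no fixed critical point. -/
theorem no_fixed_critical_point
    (a : ℂ) (ha : Transcendental ℚ a)
    (n : ℕ) (hn : 1 ≤ n) (d : Fin n → ℕ) (hd : ∀ j, 2 ≤ d j) :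
    ¬∃ p : ℂ, compSeq a n d p = p ∧ deriv (compSeq a n d) p = 0 :=
  no_fixed_critical_point_general a ha n d hd
end

section
/- Let F be a finite set, 𝒜 a finite set of functions from F to F, and w : 𝒜 × F → (0, ∞). Suppose that for every ℓ ≥ 1, every sequence T_0, …, T_{ℓ−1} ∈ 𝒜, and every p ∈ F fixed by the composition T_{ℓ−1} ∘ ⋯ ∘ T_0, the cycle product ∏_{j=0}^{ℓ−1} w(T_j, (T_{j−1} ∘ ⋯ ∘ T_0)(p)) is strictly less than 1 (where the j = 0 factor is w(T_0, p)). Then there exists a function c : F → (0, ∞) such that w(T, p)·c(p)/c(T(p)) < 1 for every T ∈ 𝒜 and every p ∈ F. -/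
/-- Apply a list of maps in order: `applyList Tm [a₀, …, a_{ℓ-1}] p = (T_{ℓ-1} ∘ ⋯ ∘ T₀) p`. -/
def applyList {A F : Type*} (Tm : A → F → F) : List A → F → F
  | [], p => p
  | a :: L, p => applyList Tm L (Tm a p)

/-- The cycle product `∏_{j<ℓ} w(T_j, (T_{j-1} ∘ ⋯ ∘ T₀)(p))`. -/
def cycleProd {A F : Type*} (Tm : A → F → F) (w : A → F → ℝ) : List A → F → ℝ
  | [], _ => 1
  | a :: L, p => w a p * cycleProd Tm w L (Tm a p)

/-!
There are finitely many cycles of length at most `card F`, each of product `< 1`, so for some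
`ε > 1` the rescaled weights `ε • w` still give all of them product `≤ 1`. Cutting such cycles out
of a path does not decrease its product, so every path product of `ε • w` is dominated by one of
length at most `card F`, and `M p := ⨆ L, cycleProd Tm (ε • w) L p` is finite. Prepending a step
gives `ε * w a p * M (Tm a p) ≤ M p`, and `c := M⁻¹` works since `ε > 1`.
-/

open Filter Topology

section PathProducts

variable {A F : Type*} (Tm : A → F → F) (w : A → F → ℝ)

lemma applyList_append (L₁ L₂ : List A) (p : F) :
    applyList Tm (L₁ ++ L₂) p = applyList Tm L₂ (applyList Tm L₁ p) := by
  induction L₁ generalizing p with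
  | nil => rfl
  | cons a L ih => exact ih _

lemma cycleProd_append (L₁ L₂ : List A) (p : F) :
    cycleProd Tm w (L₁ ++ L₂) p
      = cycleProd Tm w L₁ p * cycleProd Tm w L₂ (applyList Tm L₁ p) := by
  induction L₁ generalizing p with
  | nil => simp [cycleProd, applyList]
  | cons a L ih => simp only [List.cons_append, cycleProd, applyList, ih, mul_assoc]

lemma cycleProd_nonneg (hw : ∀ a p, 0 ≤ w a p) (L : List A) (p : F) :
    0 ≤ cycleProd Tm w L p := by
  induction L generalizing p with
  | nil => exact zero_le_one
  | cons a L ih => exact mul_nonneg (hw a p) (ih _)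

lemma cycleProd_const_mul (ε : ℝ) (L : List A) (p : F) :
    cycleProd Tm (fun a q => ε * w a q) L p = ε ^ L.length * cycleProd Tm w L p := by
  induction L generalizing p with
  | nil => simp [cycleProd]
  | cons a L ih => simp only [cycleProd, ih, List.length_cons, pow_succ]; ring

lemma exists_cycle_of_card_lt_length [Fintype F] {L : List A}
    (hL : Fintype.card F < L.length) (p : F) :
    ∃ L₁ L₂ L₃ : List A, L = L₁ ++ L₂ ++ L₃ ∧ L₂ ≠ [] ∧ L₂.length ≤ Fintype.card F ∧
      applyList Tm L₂ (applyList Tm L₁ p) = applyList Tm L₁ p := by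
  obtain ⟨i, j, hne, hij⟩ := Fintype.exists_ne_map_eq_of_card_lt
    (fun i : Fin (Fintype.card F + 1) => applyList Tm (L.take i) p) (by simp)
  wlog hlt : i < j generalizing i j
  · exact this j i hne.symm hij.symm (lt_of_le_of_ne (not_lt.mp hlt) hne.symm)
  obtain ⟨d, hd⟩ : ∃ d, (j : ℕ) = i + d := ⟨j - i, by omega⟩
  refine ⟨L.take i, (L.drop i).take d, (L.drop i).drop d, ?_, ?_, ?_, ?_⟩
  · simp only [List.append_assoc, List.take_append_drop]
  · rw [← List.length_pos_iff, List.length_take, List.length_drop]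
    omega
  · rw [List.length_take]
    omega
  · rw [← applyList_append, ← List.take_add, ← hd]
    exact hij.symm

lemma exists_length_le_card_cycleProd_le [Fintype F] (hw : ∀ a p, 0 ≤ w a p)
    (hcycle : ∀ L : List A, L ≠ [] → L.length ≤ Fintype.card F →
      ∀ p : F, applyList Tm L p = p → cycleProd Tm w L p ≤ 1)
    (L : List A) (p : F) :
    ∃ L' : List A, L'.length ≤ Fintype.card F ∧ cycleProd Tm w L p ≤ cycleProd Tm w L' p := by
  induction hn : L.length using Nat.strong_induction_on generalizing L with
  | _ n ih =>
  rcases le_or_gt n (Fintype.card F) with hshort | hlong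
  · exact ⟨L, hn ▸ hshort, le_rfl⟩
  obtain ⟨L₁, L₂, L₃, rfl, hne, hlen, hfix⟩ := exists_cycle_of_card_lt_length Tm (hn ▸ hlong) p
  have hshorter : (L₁ ++ L₃).length < n := by
    have := List.length_pos_iff.mpr hne
    simp only [← hn, List.length_append]
    omega
  obtain ⟨L', hL', hle⟩ := ih _ hshorter (L₁ ++ L₃) rfl
  refine ⟨L', hL', le_trans ?_ hle⟩
  rw [cycleProd_append, cycleProd_append, cycleProd_append, applyList_append, hfix]
  exact mul_le_mul_of_nonneg_right
    (mul_le_of_le_one_right (cycleProd_nonneg Tm w hw _ _) (hcycle _ hne hlen _ hfix))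
    (cycleProd_nonneg Tm w hw _ _)

lemma bddAbove_range_cycleProd [Finite A] [Fintype F] (hw : ∀ a p, 0 ≤ w a p)
    (hcycle : ∀ L : List A, L ≠ [] → L.length ≤ Fintype.card F →
      ∀ p : F, applyList Tm L p = p → cycleProd Tm w L p ≤ 1)
    (p : F) : BddAbove (Set.range fun L => cycleProd Tm w L p) := by
  obtain ⟨b, hb⟩ :=
    ((List.finite_length_le A (Fintype.card F)).image fun L => cycleProd Tm w L p).bddAbove
  refine ⟨b, ?_⟩
  rintro _ ⟨L, rfl⟩
  obtain ⟨L', hL', hle⟩ := exists_length_le_card_cycleProd_le Tm w hw hcycle L p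
  exact hle.trans (hb ⟨L', hL', rfl⟩)

lemma exists_one_lt_cycleProd_const_mul_le_one [Finite A] [Fintype F]
    (hcycle : ∀ L : List A, L ≠ [] → ∀ p : F, applyList Tm L p = p → cycleProd Tm w L p < 1) :
    ∃ ε : ℝ, 1 < ε ∧ ∀ L : List A, L ≠ [] → L.length ≤ Fintype.card F →
      ∀ p : F, applyList Tm L p = p → cycleProd Tm (fun a q => ε * w a q) L p ≤ 1 := by
  set S : Set (List A × F) :=
    {x | x.1 ≠ [] ∧ x.1.length ≤ Fintype.card F ∧ applyList Tm x.1 x.2 = x.2}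
  have hS : S.Finite :=
    ((List.finite_length_le A (Fintype.card F)).prod Set.finite_univ).subset
      fun x hx => ⟨hx.2.1, trivial⟩
  have hnear : ∀ᶠ ε in 𝓝[>] (1 : ℝ), ∀ x ∈ S, ε ^ x.1.length * cycleProd Tm w x.1 x.2 < 1 := by
    refine eventually_nhdsWithin_of_eventually_nhds ((eventually_all_finite hS).mpr ?_)
    rintro ⟨L, p⟩ ⟨hne, -, hfix⟩
    refine Tendsto.eventually_lt_const (hcycle L hne p hfix) ?_
    exact (by fun_prop : Continuous fun ε : ℝ => ε ^ L.length * cycleProd Tm w L p).tendsto' 1 _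
      (by simp)
  obtain ⟨ε, hε, hε1⟩ := (hnear.and self_mem_nhdsWithin).exists
  refine ⟨ε, hε1, fun L hne hlen p hfix => ?_⟩
  rw [cycleProd_const_mul]
  exact (hε (L, p) ⟨hne, hlen, hfix⟩).le

end PathProducts

/-- Let `F` be a finite set, `𝒜` a finite family of maps `F → F`, and
`w` a positive weight.  If along every cycle (every fixed point `p` of every nonempty
composition) the product of the weights is `< 1`, then there is a positive function
`c : F → (0, ∞)` with `w(T, p)·c(p)/c(T p) < 1` for all `T ∈ 𝒜` and `p ∈ F`. -/
theorem exists_scaling_of_cycleProd_lt_one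
    {A F : Type*} [Fintype A] [Fintype F]
    (Tm : A → F → F) (w : A → F → ℝ) (hw : ∀ a p, 0 < w a p)
    (hcycle : ∀ L : List A, L ≠ [] → ∀ p : F, applyList Tm L p = p → cycleProd Tm w L p < 1) :
    ∃ c : F → ℝ, (∀ p, 0 < c p) ∧ ∀ (a : A) (p : F), w a p * c p / c (Tm a p) < 1 := by
  obtain ⟨ε, hε, hεcycle⟩ := exists_one_lt_cycleProd_const_mul_le_one Tm w hcycle
  set w' : A → F → ℝ := fun a q => ε * w a q
  have hw' : ∀ a q, 0 ≤ w' a q := fun a q => mul_nonneg (zero_le_one.trans hε.le) (hw a q).le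
  have hbdd := bddAbove_range_cycleProd Tm w' hw' hεcycle
  set M : F → ℝ := fun p => ⨆ L, cycleProd Tm w' L p
  have hM : ∀ p, 1 ≤ M p := fun p => le_ciSup (hbdd p) []
  have hstep : ∀ a p, w' a p * M (Tm a p) ≤ M p := fun a p => by
    rw [Real.mul_iSup_of_nonneg (hw' a p)]
    exact ciSup_le fun L => le_ciSup (hbdd p) (a :: L)
  refine ⟨fun p => (M p)⁻¹, fun p => inv_pos.mpr (one_pos.trans_le (hM p)), fun a p => ?_⟩
  have hpos : 0 < w a p * M (Tm a p) := mul_pos (hw a p) (one_pos.trans_le (hM _))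
  rw [div_inv_eq_mul, mul_right_comm, ← div_eq_mul_inv, div_lt_one (one_pos.trans_le (hM p))]
  calc w a p * M (Tm a p) < ε * (w a p * M (Tm a p)) := lt_mul_of_one_lt_left hpos hε
    _ = w' a p * M (Tm a p) := (mul_assoc _ _ _).symm
    _ ≤ M p := hstep a p
end

section
/- Let r > 0 and let A ⊆ ℂ be a Lebesgue measurable set whose area (2-dimensional Lebesgue measure) satisfies λ(A) ≤ λ(B(0, r)), where B(0, r) is the open disk of radius r centered at 0. Then ∫_A (1 + |z|²)⁻² dλ(z) ≤ ∫_{B(0,r)} (1 + |z|²)⁻² dλ(z). Equivalently, among planar sets of a given Euclidean area, the disk centered at the origin maximizes spherical area. -/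
open MeasureTheory Metric Set

section Bathtub

variable {α : Type*} [MeasurableSpace α] {μ : Measure α} {A B : Set α}

theorem measureReal_sdiff_le_sdiff_of_le (hA : MeasurableSet A) (hB : MeasurableSet B)
    (hμB : μ B ≠ ⊤) (hAB : μ A ≤ μ B) : μ.real (A \ B) ≤ μ.real (B \ A) := by
  have hμA : μ A ≠ ⊤ := ne_top_of_le_ne_top hμB hAB
  have splitA := measureReal_sdiff_add_inter (μ := μ) (s := A) hB hμA
  have splitB := measureReal_sdiff_add_inter (μ := μ) (s := B) hA hμB
  have hAB_real : μ.real A ≤ μ.real B := ENNReal.toReal_mono hμB hAB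
  rw [inter_comm] at splitB
  linarith

/-- Bathtub principle: trading the part of `A` outside `B`, where `f ≤ c`, for the at least as
large part of `B` outside `A`, where `c ≤ f`, cannot decrease the integral. -/
theorem setIntegral_le_setIntegral_of_le_const_of_const_le {f : α → ℝ} {c : ℝ} (hc : 0 ≤ c)
    (hA : MeasurableSet A) (hB : MeasurableSet B) (hμB : μ B ≠ ⊤) (hAB : μ A ≤ μ B)
    (hfA : IntegrableOn f A μ) (hfB : IntegrableOn f B μ)
    (hf_le : ∀ x ∈ A \ B, f x ≤ c) (hf_ge : ∀ x ∈ B \ A, c ≤ f x) :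
    ∫ x in A, f x ∂μ ≤ ∫ x in B, f x ∂μ := by
  have hμA : μ A ≠ ⊤ := ne_top_of_le_ne_top hμB hAB
  have outside_B : ∫ x in A \ B, f x ∂μ ≤ c * μ.real (A \ B) := by
    have := setIntegral_mono_on (hfA.mono_set sdiff_subset)
      (integrableOn_const (measure_ne_top_of_subset sdiff_subset hμA)) (hA.diff hB) hf_le
    rwa [setIntegral_const, smul_eq_mul, mul_comm] at this
  have outside_A : c * μ.real (B \ A) ≤ ∫ x in B \ A, f x ∂μ :=
    setIntegral_ge_of_const_le_real (hB.diff hA) (measure_ne_top_of_subset sdiff_subset hμB)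
      hf_ge (hfB.mono_set sdiff_subset)
  calc ∫ x in A, f x ∂μ = ∫ x in A ∩ B, f x ∂μ + ∫ x in A \ B, f x ∂μ :=
        (integral_inter_add_sdiff hB hfA).symm
    _ ≤ ∫ x in B ∩ A, f x ∂μ + c * μ.real (B \ A) := by
        rw [inter_comm]
        gcongr
        exact outside_B.trans
          (mul_le_mul_of_nonneg_left (measureReal_sdiff_le_sdiff_of_le hA hB hμB hAB) hc)
    _ ≤ ∫ x in B, f x ∂μ := by
        rw [← integral_inter_add_sdiff hA hfB]
        gcongr

end Bathtub

section Radial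

variable {E : Type*} [NormedAddCommGroup E] [MeasurableSpace E] [OpensMeasurableSpace E]
  {μ : Measure E} {g : ℝ → ℝ} {A : Set E} {r : ℝ}

theorem setIntegral_comp_norm_le_setIntegral_ball (hg : AntitoneOn g (Ici 0))
    (hg_nonneg : ∀ t, 0 ≤ t → 0 ≤ g t) (hA : MeasurableSet A)
    (hball : μ (ball 0 r) ≠ ⊤) (hAB : μ A ≤ μ (ball 0 r))
    (hgA : IntegrableOn (fun x ↦ g ‖x‖) A μ) (hgB : IntegrableOn (fun x ↦ g ‖x‖) (ball 0 r) μ) :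
    ∫ x in A, g ‖x‖ ∂μ ≤ ∫ x in ball 0 r, g ‖x‖ ∂μ := by
  -- The threshold radius `max r 0` stays in the domain of monotonicity even when the ball is empty.
  refine setIntegral_le_setIntegral_of_le_const_of_const_le (c := g (max r 0))
    (hg_nonneg _ (le_max_right r 0)) hA measurableSet_ball hball hAB hgA hgB ?_ ?_
  · rintro x ⟨-, hx⟩
    rw [mem_ball_zero_iff, not_lt] at hx
    exact hg (le_max_right r 0) (norm_nonneg x) (max_le hx (norm_nonneg x))
  · rintro x ⟨hx, -⟩
    rw [mem_ball_zero_iff] at hx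
    exact hg (norm_nonneg x) (le_max_right r 0) (hx.le.trans (le_max_left r 0))

end Radial

theorem antitoneOn_inv_sq_one_add_sq : AntitoneOn (fun t : ℝ ↦ ((1 + t ^ 2) ^ 2)⁻¹) (Ici 0) :=
  fun s hs _ _ hst ↦ inv_anti₀ (by positivity) (by gcongr)

theorem integrableOn_inv_sq_one_add_sq_norm {E : Type*} [NormedAddCommGroup E]
    [MeasurableSpace E] [OpensMeasurableSpace E] {μ : Measure E} {s : Set E} (hs : μ s ≠ ⊤) :
    IntegrableOn (fun x : E ↦ ((1 + ‖x‖ ^ 2) ^ 2)⁻¹) s μ := by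
  refine Measure.integrableOn_of_bounded (M := 1) hs (by fun_prop) (ae_of_all _ fun x ↦ ?_)
  rw [Real.norm_of_nonneg (by positivity)]
  exact inv_le_one_of_one_le₀ (one_le_pow₀ (le_add_of_nonneg_right (by positivity)))

theorem spherical_area_le_of_area_le_general
    (r : ℝ) (A : Set ℂ) (hA : MeasurableSet A)
    (hvol : volume A ≤ volume (Metric.ball (0 : ℂ) r)) :
    ∫ z in A, ((1 + ‖z‖ ^ 2) ^ 2)⁻¹ ≤
      ∫ z in Metric.ball (0 : ℂ) r, ((1 + ‖z‖ ^ 2) ^ 2)⁻¹ := by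
  have hball : volume (ball (0 : ℂ) r) ≠ ⊤ := measure_ball_lt_top.ne
  exact setIntegral_comp_norm_le_setIntegral_ball (g := fun t ↦ ((1 + t ^ 2) ^ 2)⁻¹)
    antitoneOn_inv_sq_one_add_sq (fun _ _ ↦ by positivity) hA hball hvol
    (integrableOn_inv_sq_one_add_sq_norm (ne_top_of_le_ne_top hball hvol))
    (integrableOn_inv_sq_one_add_sq_norm hball)

/-- Among planar sets of a given Euclidean area, the disk centered at the
origin maximizes spherical area: if `λ(A) ≤ λ(B(0, r))` then
`∫_A (1 + |z|²)⁻² dλ ≤ ∫_{B(0,r)} (1 + |z|²)⁻² dλ`. -/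
theorem spherical_area_le_of_area_le
    (r : ℝ) (hr : 0 < r) (A : Set ℂ) (hA : MeasurableSet A)
    (hvol : volume A ≤ volume (Metric.ball (0 : ℂ) r)) :
    ∫ z in A, ((1 + ‖z‖ ^ 2) ^ 2)⁻¹ ≤
      ∫ z in Metric.ball (0 : ℂ) r, ((1 + ‖z‖ ^ 2) ^ 2)⁻¹ :=
  spherical_area_le_of_area_le_general r A hA hvol
end

section
/- Let A, H > 0 and define Ψ : [0, ∞) → ℝ by Ψ(r) = A·r − (H/2)·r² for 0 ≤ r ≤ A/H and Ψ(r) = A²/(2H) for r > A/H. Let L > 0 and let f : [0, L] → [0, ∞) be differentiable with f(0) = 0 and f′(t)·max(A − H·f(t), 0) ≤ 1 for all t ∈ [0, L]. Then Ψ(f(t)) ≤ t for all t ∈ [0, L]. In particular, for every t with f(t) ≤ A/H one has t ≥ A·f(t) − (H/2)·f(t)². -/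
/-!
Extend `Ψ` to all of `ℝ` by `Ψ(r) = (A² - (A - H r)₊²) / (2H)`: this is `C¹` with
`Ψ'(r) = (A - H r)₊`. The hypothesis says exactly that `(Ψ ∘ f)' ≤ 1`, so `t ↦ t - Ψ(f t)` is
monotone on `[0, L]` and hence `Ψ(f t) ≤ Ψ(f 0) + t = t`.
-/

open Set Asymptotics

lemma hasDerivAt_max_zero_sq (x : ℝ) :
    HasDerivAt (fun y : ℝ => max y 0 ^ 2) (2 * max x 0) x := by
  rw [hasDerivAt_iff_isLittleO]
  -- the first-order remainder lies between `0` and `(y - x)²`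
  refine IsBigO.trans_isLittleO (IsBigO.of_norm_le fun y => ?_)
    (isLittleO_pow_sub_sub x one_lt_two)
  rw [Real.norm_eq_abs, Real.norm_eq_abs, sq_abs, smul_eq_mul, abs_le]
  rcases le_total y 0 with hy | hy <;> rcases le_total x 0 with hx | hx <;>
    simp only [max_eq_left, max_eq_right, hx, hy] <;> constructor <;> nlinarith

noncomputable def psi (A H r : ℝ) : ℝ := (A ^ 2 - max (A - H * r) 0 ^ 2) / (2 * H)

lemma hasDerivAt_psi {A H : ℝ} (hH : H ≠ 0) (r : ℝ) :
    HasDerivAt (psi A H) (max (A - H * r) 0) r := by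
  have hlin : HasDerivAt (fun r => A - H * r) (-H) r := by
    simpa using ((hasDerivAt_id r).const_mul H).const_sub A
  refine ((((hasDerivAt_max_zero_sq _).comp r hlin).const_sub (A ^ 2)).div_const
    (2 * H)).congr_deriv ?_
  field_simp

lemma psi_zero {A : ℝ} (hA : 0 ≤ A) (H : ℝ) : psi A H 0 = 0 := by
  simp [psi, hA]

lemma psi_of_le {A H r : ℝ} (hH : 0 < H) (hr : r ≤ A / H) :
    psi A H r = A * r - H / 2 * r ^ 2 := by
  rw [le_div_iff₀ hH] at hr
  rw [psi, max_eq_left (by linarith)]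
  field_simp
  ring

lemma psi_of_lt {A H r : ℝ} (hH : 0 < H) (hr : A / H < r) : psi A H r = A ^ 2 / (2 * H) := by
  rw [div_lt_iff₀ hH] at hr
  rw [psi, max_eq_right (by linarith)]
  ring

lemma monotoneOn_sub_comp_of_deriv_mul_le_one {a b : ℝ} {f f' g g' : ℝ → ℝ}
    (hf : ∀ t ∈ Icc a b, HasDerivWithinAt f (f' t) (Icc a b) t)
    (hg : ∀ r, HasDerivAt g (g' r) r) (hfg : ∀ t ∈ Icc a b, f' t * g' (f t) ≤ 1) :
    MonotoneOn (fun t => t - g (f t)) (Icc a b) := by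
  have hd : ∀ t ∈ Icc a b,
      HasDerivWithinAt (fun t => t - g (f t)) (1 - g' (f t) * f' t) (Icc a b) t := fun t ht =>
    (hasDerivWithinAt_id t _).sub ((hg (f t)).comp_hasDerivWithinAt t (hf t ht))
  refine monotoneOn_of_hasDerivWithinAt_nonneg (f' := fun t => 1 - g' (f t) * f' t)
    (convex_Icc a b) (fun t ht => (hd t ht).continuousWithinAt) (fun t ht => ?_) (fun t ht => ?_)
  · exact (hd t (interior_subset ht)).mono interior_subset
  · linarith [hfg t (interior_subset ht), mul_comm (f' t) (g' (f t))]

theorem ode_comparison_psi_general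
    (A H : ℝ) (hA : 0 < A) (hH : 0 < H)
    (L : ℝ) (f f' : ℝ → ℝ)
    (hderiv : ∀ t ∈ Set.Icc (0 : ℝ) L, HasDerivWithinAt f (f' t) (Set.Icc (0 : ℝ) L) t)
    (hf0 : f 0 = 0)
    (hineq : ∀ t ∈ Set.Icc (0 : ℝ) L, f' t * max (A - H * f t) 0 ≤ 1) :
    (∀ t ∈ Set.Icc (0 : ℝ) L,
        (if f t ≤ A / H then A * f t - H / 2 * (f t) ^ 2 else A ^ 2 / (2 * H)) ≤ t) ∧
      ∀ t ∈ Set.Icc (0 : ℝ) L, f t ≤ A / H → A * f t - H / 2 * (f t) ^ 2 ≤ t := by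
  have hmono := monotoneOn_sub_comp_of_deriv_mul_le_one hderiv (hasDerivAt_psi hH.ne') hineq
  have hpsi : ∀ t ∈ Icc 0 L, psi A H (f t) ≤ t := fun t ht => by
    have := hmono ⟨le_rfl, ht.1.trans ht.2⟩ ht ht.1
    simp only [hf0, psi_zero hA.le] at this
    linarith
  refine ⟨fun t ht => ?_, fun t ht hle => psi_of_le hH hle ▸ hpsi t ht⟩
  split_ifs with hle
  · exact psi_of_le hH hle ▸ hpsi t ht
  · exact psi_of_lt hH (not_le.mp hle) ▸ hpsi t ht

/-- Let `A, H > 0` and let `Ψ(r) = A·r − (H/2)·r²` for `0 ≤ r ≤ A/H`,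
`Ψ(r) = A²/(2H)` for `r > A/H`.  If `f : [0, L] → [0, ∞)` is differentiable with
`f(0) = 0` and `f′(t) · max(A − H·f(t), 0) ≤ 1` on `[0, L]`, then `Ψ(f(t)) ≤ t` on
`[0, L]`; in particular `t ≥ A·f(t) − (H/2)·f(t)²` whenever `f(t) ≤ A/H`. -/
theorem ode_comparison_psi
    (A H : ℝ) (hA : 0 < A) (hH : 0 < H)
    (L : ℝ) (hL : 0 < L) (f f' : ℝ → ℝ)
    (hderiv : ∀ t ∈ Set.Icc (0 : ℝ) L, HasDerivWithinAt f (f' t) (Set.Icc (0 : ℝ) L) t)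
    (hnonneg : ∀ t ∈ Set.Icc (0 : ℝ) L, 0 ≤ f t)
    (hf0 : f 0 = 0)
    (hineq : ∀ t ∈ Set.Icc (0 : ℝ) L, f' t * max (A - H * f t) 0 ≤ 1) :
    (∀ t ∈ Set.Icc (0 : ℝ) L,
        (if f t ≤ A / H then A * f t - H / 2 * (f t) ^ 2 else A ^ 2 / (2 * H)) ≤ t) ∧
      ∀ t ∈ Set.Icc (0 : ℝ) L, f t ≤ A / H → A * f t - H / 2 * (f t) ^ 2 ≤ t :=
  ode_comparison_psi_general A H hA hH L f f' hderiv hf0 hineq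
end
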